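/- Let G₀ be the empty graph on n vertices (n = 2m even), and form G_ℓ by taking the union of ℓ independent uniformly random perfect matchings of [n] as edge sets. Then for ℓ = 5(1+c) log n with c > 0 and n sufficiently large, Pr[G_ℓ is disconnected] ≤ 2 n^{-c}. -/

import Mathlib

/-!
If `G_ℓ` is disconnected, the component of a vertex or its complement is a nonempty set `S` with
`2 |S| ≤ n` that every one of the matchings maps into itself. A uniform matching does so with
probability `pm |S| * pm (n - |S|) / pm n ≤ 2 ^ (-|S|/2)`, where `pm k = (k - 1)(k - 3)⋯` counts
the perfect matchings of `k` points (and vanishes for odd `k`). With `x = 2 ^ (-ℓ/2)`, the union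
bound over `S` gives `∑_{S ≠ ∅} x ^ |S| = (1 + x) ^ n - 1 ≤ 2 n x`, and `n x ≤ n ^ (-c)` as soon
as `ℓ ≥ 2 (1 + c) log₂ n`.
-/

open MeasureTheory

/-- A perfect matching of `Fin n`, encoded as a fixed-point-free involution. -/
def PerfectMatching (n : ℕ) : Type :=
  {σ : Equiv.Perm (Fin n) // (∀ i, σ (σ i) = i) ∧ ∀ i, σ i ≠ i}

instance (n : ℕ) : Fintype (PerfectMatching n) := by
  unfold PerfectMatching; infer_instance

instance (n : ℕ) : MeasurableSpace (PerfectMatching n) := ⊤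

/-- The uniform distribution on perfect matchings of `Fin n`. -/
noncomputable def uniformPM (n : ℕ) (h : Nonempty (PerfectMatching n)) :
    Measure (PerfectMatching n) :=
  (@PMF.uniformOfFintype (PerfectMatching n) _ h).toMeasure

/-- The graph `G_ℓ` on `[n]` whose edge set is the union of the `ℓ` perfect matchings `M`. -/
def matchingUnionGraph (n ℓ : ℕ) (M : Fin ℓ → PerfectMatching n) : SimpleGraph (Fin n) :=
  SimpleGraph.fromRel (fun i j => ∃ t, (M t).1 i = j)

open Finset Equiv

structure PerfectMatchingOn (α : Type*) where
  toPerm : Perm α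
  apply_apply : ∀ x, toPerm (toPerm x) = x
  apply_ne : ∀ x, toPerm x ≠ x

namespace PerfectMatchingOn

variable {α β : Type*}

def equivSubtype :
    PerfectMatchingOn α ≃ {σ : Perm α // (∀ x, σ (σ x) = x) ∧ ∀ x, σ x ≠ x} where
  toFun σ := ⟨σ.toPerm, σ.apply_apply, σ.apply_ne⟩
  invFun σ := ⟨σ.1, σ.2.1, σ.2.2⟩

instance [Fintype α] [DecidableEq α] : Fintype (PerfectMatchingOn α) :=
  Fintype.ofEquiv _ equivSubtype.symm

@[ext]
theorem ext {σ τ : PerfectMatchingOn α} (h : ∀ x, σ.toPerm x = τ.toPerm x) : σ = τ :=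
  equivSubtype.injective (Subtype.ext (Equiv.ext h))

def congr (e : α ≃ β) : PerfectMatchingOn α ≃ PerfectMatchingOn β :=
  equivSubtype.trans <| (subtypeEquiv e.permCongr fun σ => by
    simp only [permCongr_apply, symm_apply_apply, e.forall_congr_left, ne_eq,
      ← e.eq_symm_apply]).trans equivSubtype.symm

variable (σ : PerfectMatchingOn α) {p : α → Prop}

theorem apply_mem_iff (h : ∀ x, p x → p (σ.toPerm x)) (x : α) : p (σ.toPerm x) ↔ p x :=
  ⟨fun hx => σ.apply_apply x ▸ h _ hx, h x⟩

def restrict (h : ∀ x, p (σ.toPerm x) ↔ p x) : PerfectMatchingOn {x // p x} :=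
  ⟨σ.toPerm.subtypePerm h, fun x => Subtype.ext (σ.apply_apply x), fun x hx =>
    σ.apply_ne x (congrArg Subtype.val hx)⟩

variable [DecidablePred p]

def piecewise (τ : PerfectMatchingOn {x // p x}) (ρ : PerfectMatchingOn {x // ¬p x}) :
    PerfectMatchingOn α :=
  ⟨τ.toPerm.subtypeCongr ρ.toPerm, fun x => by
    by_cases hx : p x
    · rw [Perm.subtypeCongr.left_apply _ _ hx, Perm.subtypeCongr.left_apply_subtype,
        τ.apply_apply]
    · rw [Perm.subtypeCongr.right_apply _ _ hx, Perm.subtypeCongr.right_apply_subtype,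
        ρ.apply_apply], fun x => by
    by_cases hx : p x
    · rw [Perm.subtypeCongr.left_apply _ _ hx]
      exact fun h => τ.apply_ne _ (Subtype.ext h)
    · rw [Perm.subtypeCongr.right_apply _ _ hx]
      exact fun h => ρ.apply_ne _ (Subtype.ext h)⟩

def preservingEquiv :
    {σ : PerfectMatchingOn α // ∀ x, p x → p (σ.toPerm x)} ≃
      PerfectMatchingOn {x // p x} × PerfectMatchingOn {x // ¬p x} where
  toFun σ := (σ.1.restrict (σ.1.apply_mem_iff σ.2),
    σ.1.restrict fun x => not_congr (σ.1.apply_mem_iff σ.2 x))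
  invFun τρ := ⟨piecewise τρ.1 τρ.2, fun x hx => by
    simp only [piecewise, Perm.subtypeCongr.left_apply _ _ hx]; exact (τρ.1.toPerm _).2⟩
  left_inv σ := by
    refine Subtype.ext (ext fun x => ?_)
    by_cases hx : p x
    · simp [piecewise, restrict, Perm.subtypeCongr.left_apply _ _ hx]
    · simp [piecewise, restrict, Perm.subtypeCongr.right_apply _ _ hx]
  right_inv τρ := by
    ext x : 2
    · simp [piecewise, restrict, Perm.subtypeCongr.left_apply _ _ x.2]
    · simp [piecewise, restrict, Perm.subtypeCongr.right_apply _ _ x.2]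

noncomputable def numPerfectMatchings (k : ℕ) : ℕ := Nat.card (PerfectMatchingOn (Fin k))

theorem card_eq_numPerfectMatchings [Finite α] :
    Nat.card (PerfectMatchingOn α) = numPerfectMatchings (Nat.card α) :=
  Nat.card_congr (congr (Finite.equivFin α))

theorem card_preserving [Finite α] (p : α → Prop) [DecidablePred p] :
    Nat.card {σ : PerfectMatchingOn α // ∀ x, p x → p (σ.toPerm x)} =
      numPerfectMatchings (Nat.card {x // p x}) * numPerfectMatchings (Nat.card {x // ¬p x}) := by
  rw [Nat.card_congr preservingEquiv, Nat.card_prod, card_eq_numPerfectMatchings,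
    card_eq_numPerfectMatchings]

theorem card_preserving_finset [Fintype α] [DecidableEq α] (S : Finset α) :
    Nat.card {σ : PerfectMatchingOn α // ∀ x ∈ S, σ.toPerm x ∈ S} =
      numPerfectMatchings S.card * numPerfectMatchings (Fintype.card α - S.card) := by
  rw [card_preserving (· ∈ S), Nat.card_eq_fintype_card (α := {x // x ∉ S}),
    Fintype.card_subtype_compl, Fintype.card_coe, Nat.card_eq_finsetCard]

theorem apply_eq_iff_preserves_pair [DecidableEq α] {a b : α} :
    σ.toPerm a = b ↔ ∀ x ∈ ({a, b} : Finset α), σ.toPerm x ∈ ({a, b} : Finset α) := by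
  refine ⟨?_, fun h => ?_⟩
  · rintro rfl x hx
    rcases Finset.mem_insert.1 hx with rfl | hx
    · simp
    · simp [Finset.mem_singleton.1 hx, σ.apply_apply]
  · have := h a (by simp)
    simp only [Finset.mem_insert, Finset.mem_singleton] at this
    exact this.resolve_left (σ.apply_ne a)

end PerfectMatchingOn

open PerfectMatchingOn

theorem numPerfectMatchings_zero : numPerfectMatchings 0 = 1 := by
  rw [numPerfectMatchings, Nat.card_eq_fintype_card]; decide
theorem numPerfectMatchings_one : numPerfectMatchings 1 = 0 := by
  rw [numPerfectMatchings, Nat.card_eq_fintype_card]; decide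
theorem numPerfectMatchings_two : numPerfectMatchings 2 = 1 := by
  rw [numPerfectMatchings, Nat.card_eq_fintype_card]; decide

theorem numPerfectMatchings_add_two (k : ℕ) :
    numPerfectMatchings (k + 2) = (k + 1) * numPerfectMatchings k := by
  have hfiber (b : Fin (k + 2)) :
      Nat.card {σ : PerfectMatchingOn (Fin (k + 2)) // σ.toPerm 0 = b} =
        if b = 0 then 0 else numPerfectMatchings k := by
    split_ifs with hb
    · subst hb
      exact Nat.card_eq_zero.2 (.inl ⟨fun σ => σ.1.apply_ne 0 σ.2⟩)
    · rw [Nat.card_congr (Equiv.subtypeEquivRight fun σ => σ.apply_eq_iff_preserves_pair),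
        card_preserving_finset, Finset.card_pair (Ne.symm hb), numPerfectMatchings_two, one_mul,
        Fintype.card_fin, Nat.add_sub_cancel]
  rw [numPerfectMatchings, Nat.card_congr (Equiv.sigmaFiberEquiv fun σ => σ.toPerm 0).symm,
    Nat.card_sigma, Finset.sum_congr rfl fun b _ => hfiber b]
  simp [Finset.sum_ite, Finset.filter_ne']

theorem numPerfectMatchings_odd (e : ℕ) : numPerfectMatchings (2 * e + 1) = 0 := by
  induction e with
  | zero => exact numPerfectMatchings_one
  | succ e ih => rw [show 2 * (e + 1) + 1 = 2 * e + 1 + 2 by omega,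
      numPerfectMatchings_add_two, ih, mul_zero]

theorem two_pow_mul_numPerfectMatchings_le {e r : ℕ} (h : 2 * e ≤ r) :
    2 ^ e * (numPerfectMatchings (2 * e) * numPerfectMatchings r) ≤
      numPerfectMatchings (2 * e + r) := by
  induction e with
  | zero => simp [numPerfectMatchings_zero]
  | succ e ih =>
    have ih := ih (by omega)
    rw [show 2 * (e + 1) = 2 * e + 2 by omega, show 2 * e + 2 + r = 2 * e + r + 2 by omega,
      numPerfectMatchings_add_two, numPerfectMatchings_add_two]
    calc 2 ^ (e + 1) * ((2 * e + 1) * numPerfectMatchings (2 * e) * numPerfectMatchings r)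
        = (2 * (2 * e + 1)) * (2 ^ e * (numPerfectMatchings (2 * e) * numPerfectMatchings r)) := by
          ring
      _ ≤ (2 * e + r + 1) * numPerfectMatchings (2 * e + r) :=
          Nat.mul_le_mul (by omega) ih

namespace PerfectMatchingOn

variable {α : Type*} [Fintype α] [DecidableEq α]

theorem card_preserving_le (S : Finset α) (hS : 2 * S.card ≤ Fintype.card α) :
    (Nat.card {σ : PerfectMatchingOn α // ∀ x ∈ S, σ.toPerm x ∈ S} : ℝ) ≤
      (√2)⁻¹ ^ S.card * Nat.card (PerfectMatchingOn α) := by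
  rw [card_preserving_finset, card_eq_numPerfectMatchings, Nat.card_eq_fintype_card]
  obtain ⟨e, he | he⟩ := Nat.even_or_odd' S.card
  · have key := two_pow_mul_numPerfectMatchings_le (e := e) (r := Fintype.card α - S.card)
      (by omega)
    rw [show 2 * e + (Fintype.card α - S.card) = Fintype.card α by omega, ← he] at key
    have hpow : (√2)⁻¹ ^ S.card = ((2 : ℝ) ^ e)⁻¹ := by
      rw [he, pow_mul, inv_pow, Real.sq_sqrt zero_le_two, inv_pow]
    rw [hpow, le_inv_mul_iff₀ (by positivity)]
    exact_mod_cast key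
  · rw [he, numPerfectMatchings_odd, Nat.cast_mul, Nat.cast_zero, zero_mul]
    positivity

end PerfectMatchingOn

theorem SimpleGraph.exists_closed_finset_of_not_connected {V : Type*} [Fintype V] [Nonempty V]
    {G : SimpleGraph V} (h : ¬G.Connected) :
    ∃ S : Finset V, S.Nonempty ∧ 2 * #S ≤ Fintype.card V ∧ ∀ x ∈ S, ∀ y, G.Adj x y → y ∈ S := by
  classical
  obtain ⟨u, v, huv⟩ : ∃ u v, ¬G.Reachable u v := by
    simpa [connected_iff, Preconnected] using h
  let S : Finset V := univ.filter (G.Reachable u)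
  have hS : ∀ x ∈ S, ∀ y, G.Adj x y → y ∈ S := fun x hx y hxy => by
    simpa [S] using (mem_filter.1 hx).2.trans hxy.reachable
  have hSc : ∀ x ∈ Sᶜ, ∀ y, G.Adj x y → y ∈ Sᶜ := fun x hx y hxy => by
    simpa using fun hy => (mem_compl.1 hx) (hS y hy x hxy.symm)
  have hcard := S.card_add_card_compl
  by_cases hle : 2 * #S ≤ Fintype.card V
  · exact ⟨S, ⟨u, by simp [S]⟩, hle, hS⟩
  · exact ⟨Sᶜ, ⟨v, by simpa [S] using huv⟩, by omega, hSc⟩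

theorem measureReal_pi_univ_pi_const {ι α : Type*} [Fintype ι] [MeasurableSpace α]
    (μ : Measure α) [SigmaFinite μ] (s : Set α) :
    (Measure.pi fun _ : ι => μ).real (Set.univ.pi fun _ => s) = μ.real s ^ Fintype.card ι := by
  simp [measureReal_def, Measure.pi_pi, ENNReal.toReal_pow]

theorem one_add_pow_sub_one_le {x : ℝ} {n : ℕ} (hx : 0 ≤ x) (hnx : n * x ≤ 1) :
    (1 + x) ^ n - 1 ≤ 2 * n * x := by
  have hexp : (1 + x) ^ n ≤ Real.exp (n * x) := by
    rw [Real.exp_nat_mul]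
    exact pow_le_pow_left₀ (by linarith) (by linarith [Real.add_one_le_exp x]) n
  have hnx0 : 0 ≤ n * x := by positivity
  have := Real.abs_exp_sub_one_le (x := n * x) (by rwa [abs_of_nonneg hnx0])
  rw [abs_of_nonneg hnx0] at this
  linarith [le_abs_self (Real.exp (n * x) - 1)]

theorem sum_pow_card_le_of_nonempty {ι : Type*} [Fintype ι] {𝒮 : Finset (Finset ι)}
    (h𝒮 : ∀ S ∈ 𝒮, S.Nonempty) {x : ℝ} (hx : 0 ≤ x) (hx1 : Fintype.card ι * x ≤ 1) :
    ∑ S ∈ 𝒮, x ^ #S ≤ 2 * Fintype.card ι * x := by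
  classical
  have hempty : ∅ ∉ 𝒮 := fun h => (h𝒮 ∅ h).ne_empty rfl
  have hsum : ∑ S ∈ insert ∅ 𝒮, x ^ #S ≤ ∑ S, x ^ #S :=
    sum_le_univ_sum_of_nonneg fun _ => pow_nonneg hx _
  have hbinom : ∑ S : Finset ι, x ^ #S = (1 + x) ^ Fintype.card ι := by
    simpa [add_comm] using Fintype.sum_pow_mul_eq_add_pow ι x 1
  rw [sum_insert hempty, card_empty, pow_zero, hbinom] at hsum
  linarith [one_add_pow_sub_one_le hx hx1]

theorem mul_inv_sqrt_two_pow_le_rpow_neg {x c : ℝ} {ℓ : ℕ} (hx : 0 < x)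
    (h : 2 * (1 + c) * Real.log x ≤ ℓ * Real.log 2) :
    x * (√2)⁻¹ ^ ℓ ≤ x ^ (-c) := by
  rw [← Real.log_le_log_iff (by positivity) (by positivity), Real.log_mul hx.ne' (by positivity),
    Real.log_pow, Real.log_inv, Real.log_sqrt zero_le_two, Real.log_rpow hx]
  linarith

instance (n : ℕ) (h : Nonempty (PerfectMatching n)) : IsProbabilityMeasure (uniformPM n h) := by
  unfold uniformPM; infer_instance

def PerfectMatching.equivOn (n : ℕ) : PerfectMatching n ≃ PerfectMatchingOn (Fin n) :=
  PerfectMatchingOn.equivSubtype.symm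

theorem uniformPM_real_preserving_le {n : ℕ} (h : Nonempty (PerfectMatching n))
    {S : Finset (Fin n)} (hS : 2 * #S ≤ n) :
    (uniformPM n h).real {σ | ∀ x ∈ S, σ.1 x ∈ S} ≤ (√2)⁻¹ ^ #S := by
  rw [measureReal_def, uniformPM, PMF.toMeasure_uniformOfFintype_apply _ (by trivial),
    ENNReal.toReal_div, ENNReal.toReal_natCast, ENNReal.toReal_natCast,
    div_le_iff₀ (by exact_mod_cast Fintype.card_pos), ← Nat.card_eq_fintype_card,
    ← Nat.card_eq_fintype_card]
  have e : {σ : PerfectMatching n | ∀ x ∈ S, σ.1 x ∈ S} ≃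
      {τ : PerfectMatchingOn (Fin n) // ∀ x ∈ S, τ.toPerm x ∈ S} :=
    (PerfectMatching.equivOn n).subtypeEquiv fun _ => Iff.rfl
  rw [Nat.card_congr e, Nat.card_congr (PerfectMatching.equivOn n)]
  exact PerfectMatchingOn.card_preserving_le S (by simpa using hS)

theorem measureReal_not_connected_le {n ℓ : ℕ} (hn : 1 ≤ n) (h : Nonempty (PerfectMatching n)) :
    (Measure.pi fun _ : Fin ℓ => uniformPM n h).real
        {M | ¬(matchingUnionGraph n ℓ M).Connected} ≤
      ∑ S ∈ univ.filter (fun S : Finset (Fin n) => S.Nonempty), ((√2)⁻¹ ^ ℓ) ^ #S := by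
  have : Nonempty (Fin n) := ⟨⟨0, hn⟩⟩
  let 𝒮 := univ.filter (fun S : Finset (Fin n) => S.Nonempty ∧ 2 * #S ≤ n)
  calc _ ≤ (Measure.pi fun _ : Fin ℓ => uniformPM n h).real
          (⋃ S ∈ 𝒮, Set.univ.pi fun _ => {σ | ∀ x ∈ S, σ.1 x ∈ S}) := by
        refine measureReal_mono (fun M hM => ?_) (measure_ne_top _ _)
        obtain ⟨S, hne, hS, hclosed⟩ := SimpleGraph.exists_closed_finset_of_not_connected hM
        refine Set.mem_biUnion (x := S) (by simpa [𝒮, hne] using hS) fun t _ x hx =>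
          hclosed x hx _ ?_
        exact (SimpleGraph.fromRel_adj _ _ _).2 ⟨((M t).2.2 x).symm, .inl ⟨t, rfl⟩⟩
    _ ≤ _ := measureReal_biUnion_finset_le _ _
    _ ≤ ∑ S ∈ 𝒮, ((√2)⁻¹ ^ ℓ) ^ #S := by
        refine sum_le_sum fun S hS => ?_
        rw [measureReal_pi_univ_pi_const, Fintype.card_fin, ← pow_mul, mul_comm, pow_mul]
        exact pow_le_pow_left₀ measureReal_nonneg
          (uniformPM_real_preserving_le h (mem_filter.1 hS).2.2) ℓ
    _ ≤ _ := sum_le_sum_of_subset_of_nonneg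
        (fun S hS => mem_filter.2 ⟨mem_univ _, (mem_filter.1 hS).2.1⟩) fun _ _ _ => by positivity

theorem matchingUnionGraph_disconnected_prob :
    ∀ c : ℝ, 0 < c → ∃ N : ℕ, ∀ n : ℕ, N ≤ n → ∀ m : ℕ, n = 2 * m →
    ∀ h : Nonempty (PerfectMatching n),
    ((Measure.pi fun _ : Fin ⌈5 * (1 + c) * Real.log n⌉₊ => uniformPM n h)
        {M | ¬ (matchingUnionGraph n ⌈5 * (1 + c) * Real.log n⌉₊ M).Connected}).toReal
      ≤ 2 * (n : ℝ) ^ (-c) := by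
  intro c hc
  refine ⟨1, fun n hn _ _ h => ?_⟩
  set ℓ := ⌈5 * (1 + c) * Real.log n⌉₊
  have hlogn : 0 ≤ Real.log n := Real.log_natCast_nonneg n
  have hℓ : 2 * (1 + c) * Real.log n ≤ ℓ * Real.log 2 := by
    have hceil : 5 * (1 + c) * Real.log n ≤ ℓ := Nat.le_ceil _
    nlinarith [Real.log_two_gt_d9, mul_nonneg (by linarith : (0 : ℝ) ≤ 1 + c) hlogn]
  have hx : (n : ℝ) * (√2)⁻¹ ^ ℓ ≤ (n : ℝ) ^ (-c) :=
    mul_inv_sqrt_two_pow_le_rpow_neg (by exact_mod_cast hn) hℓ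
  have hx1 : (n : ℝ) * (√2)⁻¹ ^ ℓ ≤ 1 :=
    hx.trans (Real.rpow_le_one_of_one_le_of_nonpos (by exact_mod_cast hn) (by linarith))
  calc _ ≤ ∑ S ∈ univ.filter (fun S : Finset (Fin n) => S.Nonempty), ((√2)⁻¹ ^ ℓ) ^ #S :=
        measureReal_not_connected_le hn h
    _ ≤ 2 * Fintype.card (Fin n) * (√2)⁻¹ ^ ℓ :=
        sum_pow_card_le_of_nonempty (fun _ hS => (mem_filter.1 hS).2) (by positivity)
          (by rwa [Fintype.card_fin])
    _ ≤ 2 * (n : ℝ) ^ (-c) := by rw [Fintype.card_fin]; linarith
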